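/- arXiv:math/0511223 — 4 statements merged into one kernel-verified Lean document; each statement's English description precedes it below -/
import Mathlib

section
/- For any matroid M and any two bases B and D of M, and any element b ∈ B, there exists d ∈ D such that both (B \ {b}) ∪ {d} and (D \ {d}) ∪ {b} are bases of M. -/
/-- **Symmetric exchange property.** For any (finite) matroid `M`, bases `B`, `D`,
and `b ∈ B`, there is `d ∈ D` such that `(B \ {b}) ∪ {d}` and `(D \ {d}) ∪ {b}`
are both bases of `M`. -/
theorem symmetric_exchange {α : Type*} (M : Matroid α) [M.Finite]
    (B D : Set α) (hB : M.IsBase B) (hD : M.IsBase D) (b : α) (hb : b ∈ B) :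
    ∃ d ∈ D, M.IsBase (insert d (B \ {b})) ∧ M.IsBase (insert b (D \ {d})) := by
  by_cases hbD : b ∈ D
  · refine ⟨b, hbD, ?_, ?_⟩ <;>
      rw [Set.insert_diff_singleton, Set.insert_eq_of_mem (by assumption)]
    · exact hB
    · exact hD
  -- `b ∉ D`. Let `K` be the set of `d ∈ D` that can be replaced by `b` in `D`.
  have hbE : b ∈ M.E := hB.subset_ground hb
  set K : Set α := {d ∈ D | b ∉ M.closure (D \ {d})} with hK_def
  have hKD : K ⊆ D := fun d hd => hd.1
  have hKE : K ⊆ M.E := hKD.trans hD.subset_ground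
  have hbK : b ∉ K := fun h => hbD (hKD h)
  have hKindep : M.Indep K := hD.indep.subset hKD
  -- key claim : `b ∈ M.closure K`
  have hbclK : b ∈ M.closure K := by
    by_contra hcon
    have hins : M.Indep (insert b K) := by
      rw [hKindep.insert_indep_iff_of_notMem hbK]
      exact ⟨hbE, hcon⟩
    obtain ⟨B', hB'basis, hB'sup⟩ := hins.subset_isBasis_of_subset
      (Set.insert_subset_insert hKD) (Set.insert_subset hbE hD.subset_ground)
    have hB'base : M.IsBase B' := by
      refine hB'basis.indep.isBase_of_ground_subset_closure ?_
      rw [hB'basis.closure_eq_closure, ← hD.closure_eq]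
      exact M.closure_subset_closure (Set.subset_insert b D)
    have hbB' : b ∈ B' := hB'sup (Set.mem_insert b K)
    have hB'sub : B' ⊆ insert b D := hB'basis.subset
    -- there is some `d ∈ D \ B'`
    have hDne : ¬ D ⊆ B' := by
      intro hsub
      have := hD.eq_of_subset_indep hB'base.indep hsub
      exact hbD (this ▸ hbB')
    obtain ⟨d, hdD, hdB'⟩ := Set.not_subset.mp hDne
    -- then `B' = insert b (D \ {d})`
    have hsub1 : B' \ {b} ⊆ D \ {d} := by
      intro x hx
      have hxD : x ∈ D := (hB'sub hx.1).resolve_left hx.2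
      exact ⟨hxD, fun h => hdB' (h ▸ hx.1)⟩
    have hDfin : D.Finite := hD.finite
    have hcard : (D \ {d}).encard ≤ (B' \ {b}).encard := by
      rw [Set.encard_diff_singleton_of_mem hdD, Set.encard_diff_singleton_of_mem hbB',
        hB'base.encard_eq_encard_of_isBase hD]
    have heq : B' \ {b} = D \ {d} :=
      Set.Finite.eq_of_subset_of_encard_le' hDfin.diff hsub1 hcard
    have hdK : d ∈ K := by
      refine ⟨hdD, ?_⟩
      rw [← heq]
      exact hB'base.indep.notMem_closure_diff_of_mem hbB'
    exact hdB' (hB'sup (Set.mem_insert_of_mem b hdK))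
  -- `b ∉ M.closure (B \ {b})`
  have hbnB : b ∉ M.closure (B \ {b}) := hB.indep.notMem_closure_diff_of_mem hb
  -- hence `K` is not contained in `M.closure (B \ {b})`, giving the desired `d`
  have hKn : ¬ K ⊆ M.closure (B \ {b}) := by
    intro hsub
    exact hbnB (M.closure_subset_closure_of_subset_closure hsub hbclK)
  obtain ⟨d, hdK, hdcl⟩ := Set.not_subset.mp hKn
  have hdD : d ∈ D := hKD hdK
  have hdb : d ≠ b := fun h => hbD (h ▸ hdD)
  have hdB : d ∉ B := by
    intro h
    exact hdcl (M.subset_closure (B \ {b}) (Set.diff_subset.trans hB.subset_ground)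
      ⟨h, hdb⟩)
  refine ⟨d, hdD, ?_, ?_⟩
  · refine hB.exchange_isBase_of_indep hdB ?_
    rw [(hB.indep.subset Set.diff_subset).insert_indep_iff_of_notMem
      (fun h => hdB h.1)]
    exact ⟨hD.subset_ground hdD, hdcl⟩
  · refine hD.exchange_isBase_of_indep hbD ?_
    rw [(hD.indep.subset Set.diff_subset).insert_indep_iff_of_notMem
      (fun h => hbD h.1)]
    exact ⟨hbE, hdK.2⟩
end

section
/- Let M be a matroid and let B₁,…,B_k be bases of M. Let m ∈ ℕⁿ be the multiset union of B₁,…,B_k, and let M′ be the parallel extension of M with mᵢ copies of element i, with projection map α. Then there exist pairwise disjoint bases B₁′,…,B_k′ of M′ with α(Bᵢ′) = Bᵢ for each i, whose union is the whole ground set of M′. -/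
/-- Let `B 0, …, B (k-1)` be bases of `M` and let `M' = M.comap f` be the parallel extension
of `M` in which each element `a` has as many parallel copies as the number of bases `B j`
containing it. Then there are pairwise disjoint bases `B' i` of `M'` with `f(B' i) = B i`
whose union is the whole ground set of `M'`. -/
theorem lift_bases_to_parallel_extension {α β : Type*} (M : Matroid α) [M.Finite] [Finite β]
    (f : β → α) (k : ℕ) (B : Fin k → Set α) (hB : ∀ i, M.IsBase (B i))
    (hfib : ∀ a : α, Nat.card (f ⁻¹' {a}) = Nat.card {j : Fin k // a ∈ B j}) :
    ∃ B' : Fin k → Set β, (∀ i, (M.comap f).IsBase (B' i)) ∧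
      Pairwise (Function.onFun Disjoint B') ∧
      (∀ i, f '' B' i = B i) ∧ ⋃ i, B' i = Set.univ := by
  classical
  have hne : ∀ a : α, Nonempty ((f ⁻¹' {a} : Set β) ≃ {j : Fin k // a ∈ B j}) := fun a =>
    Finite.card_eq.1 (hfib a)
  have e : ∀ a : α, (f ⁻¹' {a} : Set β) ≃ {j : Fin k // a ∈ B j} := fun a => (hne a).some
  set g : β → Fin k := fun b => (e (f b) ⟨b, rfl⟩).1 with hg
  have hgB : ∀ b, f b ∈ B (g b) := fun b => (e (f b) ⟨b, rfl⟩).2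
  -- helper for rewriting along fiber equalities
  have hcongr : ∀ (b : β) (a : α) (h : f b = a),
      (e (f b) ⟨b, rfl⟩ : {j : Fin k // f b ∈ B j}).1 = (e a ⟨b, h⟩).1 := by
    intro b a h; subst h; rfl
  have himg : ∀ i, f '' {b | g b = i} = B i := by
    intro i
    apply Set.Subset.antisymm
    · rintro _ ⟨b, hb, rfl⟩
      rw [← hb]; exact hgB b
    · intro a ha
      set x := (e a).symm ⟨i, ha⟩ with hx
      have hb' : f x.1 = a := x.2
      refine ⟨x.1, ?_, hb'⟩
      show g x.1 = i
      have h1 : (e (f x.1) ⟨x.1, rfl⟩).1 = (e a ⟨x.1, hb'⟩).1 := hcongr x.1 a hb'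
      have h3 : (⟨x.1, hb'⟩ : (f ⁻¹' {a} : Set β)) = x := Subtype.ext rfl
      rw [hg]
      simp only [h1, h3]; simp only [hx, Equiv.apply_symm_apply]
  have hinj : ∀ i, Set.InjOn f {b | g b = i} := by
    intro i b hb b' hb' hff
    have hb'' : f b' = f b := hff.symm
    have h1 : (e (f b') ⟨b', rfl⟩).1 = (e (f b) ⟨b', hb''⟩).1 := hcongr b' (f b) hb''
    have h2 : (e (f b) ⟨b, rfl⟩) = (e (f b) ⟨b', hb''⟩) := by
      apply Subtype.ext
      rw [← h1]
      exact hb.trans hb'.symm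
    have := (e (f b)).injective h2
    exact congrArg Subtype.val this
  have hindep : ∀ i, (M.comap f).Indep {b | g b = i} := by
    intro i
    rw [Matroid.comap_indep_iff, himg i]
    exact ⟨(hB i).indep, hinj i⟩
  refine ⟨fun i => {b | g b = i}, ?_, ?_, himg, ?_⟩
  · intro i
    rw [Matroid.isBase_iff_maximal_indep]
    refine ⟨hindep i, fun I hI hsub => ?_⟩
    intro b hbI
    rw [Matroid.comap_indep_iff] at hI
    obtain ⟨hIind, hIinj⟩ := hI
    have hsub' : B i ⊆ f '' I := by
      rw [← himg i]; exact Set.image_mono hsub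
    have himgeq : f '' I = B i := ((hB i).eq_of_subset_indep hIind hsub').symm
    have : f b ∈ f '' {b | g b = i} := by rw [himg i, ← himgeq]; exact ⟨b, hbI, rfl⟩
    obtain ⟨b', hb', hfb⟩ := this
    have : b' = b := hIinj (hsub hb') hbI hfb
    exact this ▸ hb'
  · intro i j hij
    rw [Function.onFun, Set.disjoint_left]
    rintro b (hbi : g b = i) (hbj : g b = j)
    exact hij (hbi ▸ hbj ▸ rfl)
  · ext b
    simp only [Set.mem_iUnion, Set.mem_univ, iff_true]
    exact ⟨g b, rfl⟩
end

section
/- Let H and H′ be two graphs on the same finite vertex set V, each with maximum degree at most 1 (i.e., each is a partial matching), and with the same number of edges. Then H can be transformed into H′ by a sequence of matchings H = H₀, H₁, …, H_t = H′ on V, each of maximum degree at most 1, where each Hᵢ₊₁ is obtained from Hᵢ by one of: (a) deleting an edge (e₁,e₂) and adding an edge (e₁,e₅) or (e₂,e₅) for some isolated vertex e₅; or (b) deleting two edges (e₁,e₂),(e₃,e₄) and adding two edges forming a different perfect matching on {e₁,e₂,e₃,e₄}. -/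
/-- A partial matching on `V`: a loopless graph in which every vertex has degree at most 1. -/
def IsPartialMatching {V : Type*} [DecidableEq V] [Fintype V] (H : Finset (Sym2 V)) : Prop :=
  (∀ e ∈ H, ¬ e.IsDiag) ∧ ∀ v : V, (H.filter fun e => v ∈ e).card ≤ 1

/-- The elementary moves on matchings: (a) delete an edge `(e₁,e₂)` and add `(e₁,e₅)` or
`(e₂,e₅)` for an isolated vertex `e₅`; (b) delete two edges `(e₁,e₂), (e₃,e₄)` and add the
two edges of a different perfect matching on `{e₁,e₂,e₃,e₄}`. -/
def MatchingMove {V : Type*} [DecidableEq V] [Fintype V] (H H' : Finset (Sym2 V)) : Prop :=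
  (∃ e₁ e₂ e₅ : V, s(e₁, e₂) ∈ H ∧ (∀ e ∈ H, e₅ ∉ e) ∧
      (H' = insert s(e₁, e₅) (H.erase s(e₁, e₂)) ∨
        H' = insert s(e₂, e₅) (H.erase s(e₁, e₂)))) ∨
  (∃ e₁ e₂ e₃ e₄ : V, s(e₁, e₂) ∈ H ∧ s(e₃, e₄) ∈ H ∧ s(e₁, e₂) ≠ s(e₃, e₄) ∧
      (H' = insert s(e₁, e₃) (insert s(e₂, e₄) ((H.erase s(e₁, e₂)).erase s(e₃, e₄))) ∨
        H' = insert s(e₁, e₄) (insert s(e₂, e₃) ((H.erase s(e₁, e₂)).erase s(e₃, e₄)))))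

section Helpers

variable {V : Type*} [DecidableEq V] [Fintype V]

lemma pm_char (H : Finset (Sym2 V)) :
    IsPartialMatching H ↔ ((∀ e ∈ H, ¬ e.IsDiag) ∧
      ∀ e ∈ H, ∀ f ∈ H, ∀ v : V, v ∈ e → v ∈ f → e = f) := by
  constructor
  · rintro ⟨h1, h2⟩
    refine ⟨h1, fun e he f hf v hv hv' => ?_⟩
    have he' : e ∈ H.filter fun e => v ∈ e := by simp [he, hv]
    have hf' : f ∈ H.filter fun e => v ∈ e := by simp [hf, hv']
    exact Finset.card_le_one.mp (h2 v) _ he' _ hf'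
  · rintro ⟨h1, h2⟩
    refine ⟨h1, fun v => ?_⟩
    apply Finset.card_le_one.mpr
    intro e he f hf
    simp only [Finset.mem_filter] at he hf
    exact h2 e he.1 f hf.1 v he.2 hf.2

lemma pm_subset {H₁ H : Finset (Sym2 V)} (hsub : H₁ ⊆ H) (hH : IsPartialMatching H) :
    IsPartialMatching H₁ := by
  rw [pm_char] at hH ⊢
  exact ⟨fun e he => hH.1 e (hsub he),
    fun e he f hf v hv hv' => hH.2 e (hsub he) f (hsub hf) v hv hv'⟩

lemma pm_insert {H : Finset (Sym2 V)} (hH : IsPartialMatching H) {a b : V} (hab : a ≠ b)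
    (ha : ∀ e ∈ H, a ∉ e) (hb : ∀ e ∈ H, b ∉ e) :
    IsPartialMatching (insert s(a,b) H) := by
  rw [pm_char] at hH ⊢
  obtain ⟨h1, h2⟩ := hH
  constructor
  · intro e he
    rcases Finset.mem_insert.mp he with rfl | he
    · simpa [Sym2.mk_isDiag_iff] using hab
    · exact h1 e he
  · intro e he f hf v hv hv'
    rcases Finset.mem_insert.mp he with rfl | he2
    · rcases Finset.mem_insert.mp hf with rfl | hf2
      · rfl
      · exfalso
        rcases Sym2.mem_iff.mp hv with h | h <;> subst h
        · exact ha f hf2 hv'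
        · exact hb f hf2 hv'
    · rcases Finset.mem_insert.mp hf with rfl | hf2
      · exfalso
        rcases Sym2.mem_iff.mp hv' with h | h <;> subst h
        · exact ha e he2 hv
        · exact hb e he2 hv
      · exact h2 e he2 f hf2 v hv hv'

lemma edge_form {f : Sym2 V} (hd : ¬ f.IsDiag) {a : V} (ha : a ∈ f) :
    ∃ x, x ≠ a ∧ f = s(a,x) := by
  induction f with
  | _ u v =>
    rcases Sym2.mem_iff.mp ha with rfl | rfl
    · exact ⟨v, fun h => hd (by simp [Sym2.mk_isDiag_iff, h]), rfl⟩
    · exact ⟨u, fun h => hd (by simp [Sym2.mk_isDiag_iff, h]), Sym2.eq_swap⟩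

lemma measure_step {H H₂ H' : Finset (Sym2 V)} {ab : Sym2 V} (hmem : ab ∈ H' \ H)
    (hsub : H' \ H₂ ⊆ (H' \ H).erase ab) {n : ℕ} (hle : (H' \ H).card ≤ n + 1) :
    (H' \ H₂).card ≤ n := by
  have h1 := Finset.card_le_card hsub
  have h2 := Finset.card_erase_of_mem hmem
  have h3 : 1 ≤ (H' \ H).card := Finset.card_pos.mpr ⟨ab, hmem⟩
  omega

end Helpers

/-- Any two partial matchings on the same finite vertex set with the same number of edges
are connected by a sequence of elementary moves through partial matchings. -/
theorem matchings_connected_by_moves {V : Type*} [DecidableEq V] [Fintype V]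
    (H H' : Finset (Sym2 V)) (hH : IsPartialMatching H) (hH' : IsPartialMatching H')
    (hcard : H.card = H'.card) :
    Relation.ReflTransGen (fun A B => MatchingMove A B ∧ IsPartialMatching B) H H' := by
  suffices key : ∀ n (H : Finset (Sym2 V)), (H' \ H).card ≤ n → IsPartialMatching H →
      H.card = H'.card →
      Relation.ReflTransGen (fun A B => MatchingMove A B ∧ IsPartialMatching B) H H' from
    key _ H le_rfl hH hcard
  clear hH hcard H
  have huH' : ∀ {e f : Sym2 V} {v : V}, e ∈ H' → f ∈ H' → v ∈ e → v ∈ f → e = f :=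
    fun he hf hv hv' => ((pm_char H').mp hH').2 _ he _ hf _ hv hv'
  have base : ∀ H : Finset (Sym2 V), H' \ H = ∅ → H.card = H'.card →
      Relation.ReflTransGen (fun A B => MatchingMove A B ∧ IsPartialMatching B) H H' := by
    intro H h0 hcard
    have hsub := Finset.sdiff_eq_empty_iff_subset.mp h0
    have hEq : H = H' := (Finset.eq_of_subset_of_card_le hsub hcard.le).symm
    rw [hEq]
  intro n
  induction n with
  | zero =>
    intro H hle hH hcard
    exact base H (Finset.card_eq_zero.mp (Nat.le_zero.mp hle)) hcard
  | succ n ih =>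
    intro H hle hH hcard
    rcases eq_or_ne (H' \ H) ∅ with h0 | h0
    · exact base H h0 hcard
    · obtain ⟨e, he⟩ := Finset.nonempty_iff_ne_empty.mpr h0
      obtain ⟨a, b, rfl⟩ : ∃ a b, e = s(a, b) := Sym2.ind (fun a b => ⟨a, b, rfl⟩) e
      rw [Finset.mem_sdiff] at he
      obtain ⟨heH', heH⟩ := he
      have habSD : s(a,b) ∈ H' \ H := Finset.mem_sdiff.mpr ⟨heH', heH⟩
      have hab : a ≠ b := by simpa [Sym2.mk_isDiag_iff] using hH'.1 _ heH'
      have huH : ∀ {e f : Sym2 V} {v : V}, e ∈ H → f ∈ H → v ∈ e → v ∈ f → e = f :=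
        fun he hf hv hv' => ((pm_char H).mp hH).2 _ he _ hf _ hv hv'
      by_cases hacov : ∀ f ∈ H, a ∉ f
      · by_cases hbcov : ∀ f ∈ H, b ∉ f
        · -- Case C : both a and b isolated in H; use two type-(a) moves
          have hcards : (H \ H').card = (H' \ H).card := Finset.card_sdiff_comm hcard
          have hne : (H \ H').Nonempty := by
            rw [← Finset.card_pos, hcards, Finset.card_pos]
            exact ⟨_, habSD⟩
          obtain ⟨f, hf⟩ := hne
          rw [Finset.mem_sdiff] at hf
          obtain ⟨hfH, hfH'⟩ := hf
          obtain ⟨x, y, rfl⟩ : ∃ x y, f = s(x, y) := Sym2.ind (fun x y => ⟨x, y, rfl⟩) f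
          have hxy : x ≠ y := by simpa [Sym2.mk_isDiag_iff] using hH.1 _ hfH
          have hax : a ∉ s(x,y) := hacov _ hfH
          have hbx : b ∉ s(x,y) := hbcov _ hfH
          have hxa : x ≠ a := fun h => hax (by simp [h])
          have hya : y ≠ a := fun h => hax (by simp [h])
          have hxb : x ≠ b := fun h => hbx (by simp [h])
          have hyb : y ≠ b := fun h => hbx (by simp [h])
          have hxaH : s(x,a) ∉ H := fun h => hacov _ h (by simp)
          set H₁ := insert s(x,a) (H.erase s(x,y)) with hH₁
          have pmH₁ : IsPartialMatching H₁ := by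
            refine pm_insert (pm_subset (Finset.erase_subset _ _) hH) hxa ?_ ?_
            · intro e he hxe
              exact (Finset.mem_erase.mp he).1
                (huH (Finset.mem_of_mem_erase he) hfH hxe (by simp))
            · intro e he hae
              exact hacov e (Finset.mem_of_mem_erase he) hae
          have mv₁ : MatchingMove H H₁ := Or.inl ⟨x, y, a, hfH, hacov, Or.inl rfl⟩
          have hxaE : s(x,a) ∉ H.erase s(x,y) := fun h => hxaH (Finset.mem_of_mem_erase h)
          have hstep : H₁.erase s(a,x) = H.erase s(x,y) := by
            have hsw : s(a,x) = s(x,a) := Sym2.eq_swap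
            rw [hsw, hH₁, Finset.erase_insert hxaE]
          set H₂ := insert s(a,b) (H.erase s(x,y)) with hH₂
          have pmH₂ : IsPartialMatching H₂ :=
            pm_insert (pm_subset (Finset.erase_subset _ _) hH) hab
              (fun e he => hacov e (Finset.mem_of_mem_erase he))
              (fun e he => hbcov e (Finset.mem_of_mem_erase he))
          have mv₂ : MatchingMove H₁ H₂ := by
            refine Or.inl ⟨a, x, b, ?_, ?_, Or.inl ?_⟩
            · have hsw : s(a,x) = s(x,a) := Sym2.eq_swap
              rw [hsw, hH₁]
              exact Finset.mem_insert_self _ _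
            · intro e heq hbe
              rcases Finset.mem_insert.mp heq with rfl | h
              · rcases Sym2.mem_iff.mp hbe with h | h
                · exact hxb h.symm
                · exact hab h.symm
              · exact hbcov e (Finset.mem_of_mem_erase h) hbe
            · rw [hstep]
          have hsub2 : H' \ H₂ ⊆ (H' \ H).erase s(a,b) := by
            intro h hm
            rw [Finset.mem_sdiff] at hm
            obtain ⟨h1, h2⟩ := hm
            rw [Finset.mem_erase, Finset.mem_sdiff]
            have hne2 : h ≠ s(a,b) := fun hEq => h2 (hEq ▸ Finset.mem_insert_self _ _)
            refine ⟨hne2, h1, fun hmemH => ?_⟩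
            have hhf : h = s(x,y) := by
              by_contra hne3
              exact h2 (Finset.mem_insert_of_mem (Finset.mem_erase.mpr ⟨hne3, hmemH⟩))
            exact hfH' (hhf ▸ h1)
          have hm2 : (H' \ H₂).card ≤ n := measure_step habSD hsub2 hle
          have hc2 : H₂.card = H'.card := by
            have h2 : s(a,b) ∉ H.erase s(x,y) := fun h => heH (Finset.mem_of_mem_erase h)
            rw [hH₂, Finset.card_insert_of_notMem h2, Finset.card_erase_of_mem hfH]
            have : 1 ≤ H.card := Finset.card_pos.mpr ⟨_, hfH⟩
            omega
          exact Relation.ReflTransGen.head ⟨mv₁, pmH₁⟩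
            (Relation.ReflTransGen.head ⟨mv₂, pmH₂⟩ (ih H₂ hm2 pmH₂ hc2))
        · -- Case B' : a isolated, b covered
          push_neg at hbcov
          obtain ⟨g, hgH, hbg⟩ := hbcov
          obtain ⟨y, hyb, rfl⟩ := edge_form (hH.1 g hgH) hbg
          have hya : y ≠ a := fun h => hacov _ hgH (by simp [h])
          set H₂ := insert s(b,a) (H.erase s(b,y)) with hH₂
          have hswap : s(b,a) = s(a,b) := Sym2.eq_swap
          have pmH₂ : IsPartialMatching H₂ := by
            rw [hH₂, hswap]
            refine pm_insert (pm_subset (Finset.erase_subset _ _) hH) hab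
              (fun e he => hacov e (Finset.mem_of_mem_erase he)) ?_
            intro e he hbe
            exact (Finset.mem_erase.mp he).1
              (huH (Finset.mem_of_mem_erase he) hgH hbe (by simp))
          have mv : MatchingMove H H₂ := Or.inl ⟨b, y, a, hgH, hacov, Or.inl rfl⟩
          have hsub2 : H' \ H₂ ⊆ (H' \ H).erase s(a,b) := by
            intro h hm
            rw [Finset.mem_sdiff] at hm
            obtain ⟨h1, h2⟩ := hm
            rw [Finset.mem_erase, Finset.mem_sdiff]
            have hne2 : h ≠ s(a,b) := fun hEq => h2 (by
              rw [hH₂, hswap]; exact hEq ▸ Finset.mem_insert_self _ _)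
            refine ⟨hne2, h1, fun hmemH => ?_⟩
            have hhg : h = s(b,y) := by
              by_contra hne3
              exact h2 (Finset.mem_insert_of_mem (Finset.mem_erase.mpr ⟨hne3, hmemH⟩))
            subst hhg
            exact hne2 (huH' (v := b) h1 heH' (by simp) (by simp))
          have hm2 : (H' \ H₂).card ≤ n := measure_step habSD hsub2 hle
          have hc2 : H₂.card = H'.card := by
            have h2 : s(b,a) ∉ H.erase s(b,y) := fun h =>
              heH (hswap ▸ Finset.mem_of_mem_erase h)
            rw [hH₂, Finset.card_insert_of_notMem h2, Finset.card_erase_of_mem hgH]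
            have : 1 ≤ H.card := Finset.card_pos.mpr ⟨_, hgH⟩
            omega
          exact Relation.ReflTransGen.head ⟨mv, pmH₂⟩ (ih H₂ hm2 pmH₂ hc2)
      · push_neg at hacov
        obtain ⟨f, hfH, haf⟩ := hacov
        obtain ⟨x, hxa, rfl⟩ := edge_form (hH.1 f hfH) haf
        have hxb : x ≠ b := fun h => heH (h ▸ hfH)
        by_cases hbcov : ∀ f ∈ H, b ∉ f
        · -- Case B : a covered by s(a,x), b isolated
          set H₂ := insert s(a,b) (H.erase s(a,x)) with hH₂
          have pmH₂ : IsPartialMatching H₂ := by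
            refine pm_insert (pm_subset (Finset.erase_subset _ _) hH) hab ?_
              (fun e he => hbcov e (Finset.mem_of_mem_erase he))
            intro e he hae
            exact (Finset.mem_erase.mp he).1
              (huH (Finset.mem_of_mem_erase he) hfH hae (by simp))
          have mv : MatchingMove H H₂ := Or.inl ⟨a, x, b, hfH, hbcov, Or.inl rfl⟩
          have hsub2 : H' \ H₂ ⊆ (H' \ H).erase s(a,b) := by
            intro h hm
            rw [Finset.mem_sdiff] at hm
            obtain ⟨h1, h2⟩ := hm
            rw [Finset.mem_erase, Finset.mem_sdiff]
            have hne2 : h ≠ s(a,b) := fun hEq => h2 (hEq ▸ Finset.mem_insert_self _ _)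
            refine ⟨hne2, h1, fun hmemH => ?_⟩
            have hhf : h = s(a,x) := by
              by_contra hne3
              exact h2 (Finset.mem_insert_of_mem (Finset.mem_erase.mpr ⟨hne3, hmemH⟩))
            subst hhf
            exact hne2 (huH' (v := a) h1 heH' (by simp) (by simp))
          have hm2 : (H' \ H₂).card ≤ n := measure_step habSD hsub2 hle
          have hc2 : H₂.card = H'.card := by
            have h2 : s(a,b) ∉ H.erase s(a,x) := fun h => heH (Finset.mem_of_mem_erase h)
            rw [hH₂, Finset.card_insert_of_notMem h2, Finset.card_erase_of_mem hfH]
            have : 1 ≤ H.card := Finset.card_pos.mpr ⟨_, hfH⟩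
            omega
          exact Relation.ReflTransGen.head ⟨mv, pmH₂⟩ (ih H₂ hm2 pmH₂ hc2)
        · -- Case A : both a and b covered; type-(b) move
          push_neg at hbcov
          obtain ⟨g, hgH, hbg⟩ := hbcov
          obtain ⟨y, hyb, rfl⟩ := edge_form (hH.1 g hgH) hbg
          have hya : y ≠ a := fun h => heH (by
            have : s(b,a) ∈ H := h ▸ hgH
            rwa [Sym2.eq_swap] at this)
          have hfg : s(a,x) ≠ s(b,y) := by
            intro hEq
            have hb2 : b ∈ s(a,x) := hEq.symm ▸ (by simp : b ∈ s(b,y))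
            rcases Sym2.mem_iff.mp hb2 with h | h
            · exact hab h.symm
            · exact hxb h.symm
          have hxy : x ≠ y := fun h => hfg (huH (v := x) hfH hgH (by simp) (by simp [h]))
          set H₀ := (H.erase s(a,x)).erase s(b,y) with hH₀
          have hsubH : H₀ ⊆ H := (Finset.erase_subset _ _).trans (Finset.erase_subset _ _)
          have pm0 : IsPartialMatching H₀ := pm_subset hsubH hH
          have pm1 : IsPartialMatching (insert s(x,y) H₀) := by
            refine pm_insert pm0 hxy ?_ ?_
            · intro e he hxe
              exact (Finset.mem_erase.mp (Finset.mem_of_mem_erase he)).1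
                (huH (hsubH he) hfH hxe (by simp))
            · intro e he hye
              exact (Finset.mem_erase.mp he).1 (huH (hsubH he) hgH hye (by simp))
          set H₂ := insert s(a,b) (insert s(x,y) H₀) with hH₂
          have pmH₂ : IsPartialMatching H₂ := by
            refine pm_insert pm1 hab ?_ ?_
            · intro e he hae
              rcases Finset.mem_insert.mp he with rfl | he0
              · rcases Sym2.mem_iff.mp hae with h | h
                · exact hxa h.symm
                · exact hya h.symm
              · exact (Finset.mem_erase.mp (Finset.mem_of_mem_erase he0)).1
                  (huH (hsubH he0) hfH hae (by simp))
            · intro e he hbe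
              rcases Finset.mem_insert.mp he with rfl | he0
              · rcases Sym2.mem_iff.mp hbe with h | h
                · exact hxb h.symm
                · exact hyb h.symm
              · exact (Finset.mem_erase.mp he0).1 (huH (hsubH he0) hgH hbe (by simp))
          have mv : MatchingMove H H₂ := Or.inr ⟨a, x, b, y, hfH, hgH, hfg, Or.inl rfl⟩
          have hsub2 : H' \ H₂ ⊆ (H' \ H).erase s(a,b) := by
            intro h hm
            rw [Finset.mem_sdiff] at hm
            obtain ⟨h1, h2⟩ := hm
            rw [Finset.mem_erase, Finset.mem_sdiff]
            have hne2 : h ≠ s(a,b) := fun hEq => h2 (hEq ▸ Finset.mem_insert_self _ _)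
            refine ⟨hne2, h1, fun hmemH => ?_⟩
            have h3 : h ∉ H₀ := fun hin =>
              h2 (Finset.mem_insert_of_mem (Finset.mem_insert_of_mem hin))
            rw [hH₀, Finset.mem_erase, Finset.mem_erase] at h3
            push_neg at h3
            rcases Classical.em (h = s(b,y)) with hcase | hcase
            · subst hcase
              exact hne2 (huH' (v := b) h1 heH' (by simp) (by simp))
            · have hcase2 : h = s(a,x) := by
                by_contra hne4
                exact h3 hcase hne4 hmemH
              subst hcase2
              exact hne2 (huH' (v := a) h1 heH' (by simp) (by simp))
          have hm2 : (H' \ H₂).card ≤ n := measure_step habSD hsub2 hle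
          have hc2 : H₂.card = H'.card := by
            have hgH0 : s(b,y) ∈ H.erase s(a,x) := Finset.mem_erase.mpr ⟨Ne.symm hfg, hgH⟩
            have hxyH0 : s(x,y) ∉ H₀ := by
              intro hmem
              exact (Finset.mem_erase.mp (Finset.mem_of_mem_erase hmem)).1
                (huH (v := x) (hsubH hmem) hfH (by simp) (by simp))
            have habH0 : s(a,b) ∉ insert s(x,y) H₀ := by
              intro hmem
              rcases Finset.mem_insert.mp hmem with hEq | hin
              · have : a ∈ s(x,y) := hEq ▸ (by simp : a ∈ s(a,b))
                rcases Sym2.mem_iff.mp this with h | h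
                · exact hxa h.symm
                · exact hya h.symm
              · exact heH (hsubH hin)
            have hge : 1 ≤ (H.erase s(a,x)).card := Finset.card_pos.mpr ⟨_, hgH0⟩
            rw [hH₂, Finset.card_insert_of_notMem habH0,
              Finset.card_insert_of_notMem hxyH0, hH₀,
              Finset.card_erase_of_mem hgH0, Finset.card_erase_of_mem hfH]
            rw [Finset.card_erase_of_mem hfH] at hge
            have : 1 ≤ H.card := Finset.card_pos.mpr ⟨_, hfH⟩
            omega
          exact Relation.ReflTransGen.head ⟨mv, pmH₂⟩ (ih H₂ hm2 pmH₂ hc2)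
end

section
/- Let M be a matroid of rank r on ground set E with |E| = kr and k ≥ 3, such that M is the direct sum of matroids M₁ and M₂. If the k-base graphs 𝔊_k(M₁) and 𝔊_k(M₂) are both connected (and nonempty), then the k-base graph 𝔊_k(M) is connected. -/
/-- A vertex of the `k`-base graph `𝔊_k(M)`: a set of `k` pairwise disjoint bases of `M`
whose union is the ground set. -/
def IsKBaseVertex {α : Type*} (M : Matroid α) (k : ℕ) (P : Set (Set α)) : Prop :=
  P.Finite ∧ P.ncard = k ∧ (∀ B ∈ P, M.IsBase B) ∧ P.PairwiseDisjoint id ∧ ⋃₀ P = M.E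

/-- Connectivity of the `k`-base graph: any two vertices are joined by a path in which
consecutive vertices share a common base. -/
def KBaseGraphConnected {α : Type*} (M : Matroid α) (k : ℕ) : Prop :=
  ∀ P Q : Set (Set α), IsKBaseVertex M k P → IsKBaseVertex M k Q →
    Relation.ReflTransGen
      (fun A B => IsKBaseVertex M k A ∧ IsKBaseVertex M k B ∧ (A ∩ B).Nonempty) P Q

namespace KBaseAux

open Set Function Relation

variable {α : Type*}

/-- The adjacency relation of the `k`-base graph. -/
def S (N : Matroid α) (k : ℕ) : Set (Set α) → Set (Set α) → Prop :=
  fun A B => IsKBaseVertex N k A ∧ IsKBaseVertex N k B ∧ (A ∩ B).Nonempty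

/-- Connectivity via paths. -/
def Conn (N : Matroid α) (k : ℕ) : Set (Set α) → Set (Set α) → Prop :=
  Relation.ReflTransGen (S N k)

lemma S_symm {N : Matroid α} {k : ℕ} : Symmetric (S N k) := by
  intro A B h
  exact ⟨h.2.1, h.1, by rw [Set.inter_comm]; exact h.2.2⟩

lemma Conn.symm {N : Matroid α} {k : ℕ} {A B : Set (Set α)} (h : Conn N k A B) :
    Conn N k B A := (@Relation.ReflTransGen.stdSymm _ _ ⟨fun _ _ h => S_symm h⟩).symm _ _ h

/-- A `k`-base vertex enumerated by an injective function. -/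
def Valid (N : Matroid α) (k : ℕ) (b : Fin k → Set α) : Prop :=
  Function.Injective b ∧ IsKBaseVertex N k (Set.range b)

lemma Valid.base {N : Matroid α} {k : ℕ} {b : Fin k → Set α} (hb : Valid N k b) (i : Fin k) :
    N.IsBase (b i) := hb.2.2.2.1 (b i) ⟨i, rfl⟩

lemma Valid.disj {N : Matroid α} {k : ℕ} {b : Fin k → Set α} (hb : Valid N k b) {i j : Fin k}
    (hij : i ≠ j) : Disjoint (b i) (b j) :=
  hb.2.2.2.2.1 ⟨i, rfl⟩ ⟨j, rfl⟩ (fun h => hij (hb.1 h))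

lemma Valid.iUnion_eq {N : Matroid α} {k : ℕ} {b : Fin k → Set α} (hb : Valid N k b) :
    (⋃ i, b i) = N.E := by
  rw [← Set.sUnion_range]; exact hb.2.2.2.2.2

/-- enumeration of a finite set of known cardinality -/
lemma exists_enum {β : Type*} {s : Set β} {k : ℕ} (hs : s.Finite) (hcard : s.ncard = k) :
    ∃ f : Fin k → β, Function.Injective f ∧ Set.range f = s := by
  classical
  haveI := hs.fintype
  have hc : Fintype.card s = k := by
    rw [← Set.toFinset_card, ← Set.ncard_eq_toFinset_card']; exact hcard
  refine ⟨Subtype.val ∘ (Fintype.equivFinOfCardEq hc).symm, ?_, ?_⟩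
  · exact Subtype.val_injective.comp (Equiv.injective _)
  · rw [Set.range_comp, Equiv.range_eq_univ, Set.image_univ, Subtype.range_coe]

lemma exists_valid_of_vertex {N : Matroid α} {k : ℕ} {P : Set (Set α)}
    (hP : IsKBaseVertex N k P) : ∃ b : Fin k → Set α, Valid N k b ∧ Set.range b = P := by
  obtain ⟨f, hfi, hfr⟩ := exists_enum hP.1 hP.2.1
  exact ⟨f, ⟨hfi, hfr ▸ hP⟩, hfr⟩

lemma ncard_range {β : Type*} {k : ℕ} {b : Fin k → β} (hb : Function.Injective b) :
    (Set.range b).ncard = k := by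
  rw [← Nat.card_coe_set_eq, Nat.card_range_of_injective hb, Nat.card_eq_fintype_card,
    Fintype.card_fin]

lemma valid_comp_equiv {N : Matroid α} {k : ℕ} {b : Fin k → Set α} (hb : Valid N k b)
    (e : Equiv.Perm (Fin k)) : Valid N k (b ∘ e) := by
  have hr : Set.range (b ∘ e) = Set.range b := e.surjective.range_comp b
  exact ⟨hb.1.comp e.injective, hr ▸ hb.2⟩

lemma base_nonempty {N : Matroid α} {k : ℕ} (hk : 3 ≤ k) (hne : ∃ P, IsKBaseVertex N k P) :
    ∀ B, N.IsBase B → B.Nonempty := by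
  intro B hB
  obtain ⟨P, hP⟩ := hne
  have h1 : 1 < P.ncard := by rw [hP.2.1]; omega
  obtain ⟨B₁, B₂, hB₁, hB₂, hne12⟩ := (Set.one_lt_ncard_iff hP.1).mp h1
  by_contra hBe
  rw [Set.not_nonempty_iff_eq_empty] at hBe
  have hcard : ∀ B', N.IsBase B' → B' = ∅ := by
    intro B' hB'
    have := hB'.encard_eq_encard_of_isBase hB
    rw [hBe, Set.encard_empty, Set.encard_eq_zero] at this
    exact this
  exact hne12 (by rw [hcard B₁ (hP.2.2.1 B₁ hB₁), hcard B₂ (hP.2.2.1 B₂ hB₂)])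

section Sum

variable {M₁ M₂ : Matroid α} {hdisj : Disjoint M₁.E M₂.E} {k : ℕ}

/-- combining enumerated vertices of the summands -/
def u (b c : Fin k → Set α) : Fin k → Set α := fun i => b i ∪ c i

lemma u_inter_left (hdj : Disjoint M₁.E M₂.E) {b c : Fin k → Set α} (hb : Valid M₁ k b)
    (hc : Valid M₂ k c) (i : Fin k) :
    u b c i ∩ M₁.E = b i := by
  have h1 : b i ⊆ M₁.E := (hb.base i).subset_ground
  have h2 : Disjoint (c i) M₁.E := (hdj.symm.mono_left (hc.base i).subset_ground)
  rw [u, Set.union_inter_distrib_right, Set.inter_eq_self_of_subset_left h1,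
    h2.inter_eq, Set.union_empty]

lemma u_inter_right (hdj : Disjoint M₁.E M₂.E) {b c : Fin k → Set α} (hb : Valid M₁ k b)
    (hc : Valid M₂ k c) (i : Fin k) :
    u b c i ∩ M₂.E = c i := by
  have h1 : c i ⊆ M₂.E := (hc.base i).subset_ground
  have h2 : Disjoint (b i) M₂.E := (hdj.mono_left (hb.base i).subset_ground)
  rw [u, Set.union_inter_distrib_right, Set.inter_eq_self_of_subset_left h1,
    h2.inter_eq, Set.empty_union]

lemma valid_u {b c : Fin k → Set α} (hb : Valid M₁ k b) (hc : Valid M₂ k c) :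
    Valid (Matroid.disjointSum M₁ M₂ hdisj) k (u b c) := by
  have hinj : Function.Injective (u b c) := by
    intro i j hij
    apply hb.1
    rw [← u_inter_left hdisj hb hc i, ← u_inter_left hdisj hb hc j, hij]
  have hbase : ∀ i, (Matroid.disjointSum M₁ M₂ hdisj).IsBase (u b c i) := by
    intro i
    rw [Matroid.disjointSum_isBase_iff]
    refine ⟨?_, ?_, ?_⟩
    · rw [u_inter_left hdisj hb hc i]; exact hb.base i
    · rw [u_inter_right hdisj hb hc i]; exact hc.base i
    · exact Set.union_subset_union (hb.base i).subset_ground (hc.base i).subset_ground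
  have hdisjp : ∀ i j : Fin k, i ≠ j → Disjoint (u b c i) (u b c j) := by
    intro i j hij
    rw [u, u, Set.disjoint_union_left, Set.disjoint_union_right, Set.disjoint_union_right]
    refine ⟨⟨hb.disj hij, ?_⟩, ?_, hc.disj hij⟩
    · exact hdisj.mono (hb.base i).subset_ground (hc.base j).subset_ground
    · exact hdisj.symm.mono (hc.base i).subset_ground (hb.base j).subset_ground
  refine ⟨hinj, Set.finite_range _, ncard_range hinj, ?_, ?_, ?_⟩
  · rintro B ⟨i, rfl⟩; exact hbase i
  · rintro _ ⟨i, rfl⟩ _ ⟨j, rfl⟩ hne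
    exact hdisjp i j (fun h => hne (by rw [h]))
  · rw [Set.sUnion_range, Matroid.disjointSum_ground_eq]
    have : (⋃ i, u b c i) = (⋃ i, b i) ∪ ⋃ i, c i := by
      rw [← Set.iUnion_union_distrib]; rfl
    rw [this, hb.iUnion_eq, hc.iUnion_eq]

lemma decompose (hne1 : ∀ B, M₁.IsBase B → B.Nonempty) (hne2 : ∀ B, M₂.IsBase B → B.Nonempty)
    {P : Set (Set α)} (hP : IsKBaseVertex (Matroid.disjointSum M₁ M₂ hdisj) k P) :
    ∃ b c : Fin k → Set α, Valid M₁ k b ∧ Valid M₂ k c ∧ P = Set.range (u b c) := by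
  obtain ⟨f, hfi, hfr⟩ := exists_enum hP.1 hP.2.1
  have hfP : ∀ i, f i ∈ P := fun i => hfr ▸ Set.mem_range_self i
  have hfbase : ∀ i, (Matroid.disjointSum M₁ M₂ hdisj).IsBase (f i) := fun i => hP.2.2.1 _ (hfP i)
  set b : Fin k → Set α := fun i => f i ∩ M₁.E with hbdef
  set c : Fin k → Set α := fun i => f i ∩ M₂.E with hcdef
  have hb_base : ∀ i, M₁.IsBase (b i) := fun i => (Matroid.disjointSum_isBase_iff.mp (hfbase i)).1
  have hc_base : ∀ i, M₂.IsBase (c i) := fun i => (Matroid.disjointSum_isBase_iff.mp (hfbase i)).2.1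
  have hfsub : ∀ i, f i ⊆ M₁.E ∪ M₂.E := fun i => (Matroid.disjointSum_isBase_iff.mp (hfbase i)).2.2
  have hfeq : ∀ i, f i = b i ∪ c i := by
    intro i
    rw [hbdef, hcdef, ← Set.inter_union_distrib_left,
      Set.inter_eq_self_of_subset_left (hfsub i)]
  have hfdisj : ∀ i j : Fin k, i ≠ j → Disjoint (f i) (f j) := by
    intro i j hij
    exact hP.2.2.2.1 (hfP i) (hfP j) (fun h => hij (hfi h))
  have hbinj : Function.Injective b := by
    intro i j hbij
    by_contra hij
    have hd : Disjoint (b i) (b j) :=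
      (hfdisj i j hij).mono Set.inter_subset_left Set.inter_subset_left
    rw [hbij] at hd
    exact (hne1 _ (hb_base j)).ne_empty (disjoint_self.mp hd)
  have hcinj : Function.Injective c := by
    intro i j hcij
    by_contra hij
    have hd : Disjoint (c i) (c j) :=
      (hfdisj i j hij).mono Set.inter_subset_left Set.inter_subset_left
    rw [hcij] at hd
    exact (hne2 _ (hc_base j)).ne_empty (disjoint_self.mp hd)
  have hfU : (⋃ i, f i) = M₁.E ∪ M₂.E := by
    rw [← Set.sUnion_range, hfr, hP.2.2.2.2, Matroid.disjointSum_ground_eq]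
  refine ⟨b, c, ⟨hbinj, ?_⟩, ⟨hcinj, ?_⟩, ?_⟩
  · refine ⟨Set.finite_range _, ncard_range hbinj, ?_, ?_, ?_⟩
    · rintro _ ⟨i, rfl⟩; exact hb_base i
    · rintro _ ⟨i, rfl⟩ _ ⟨j, rfl⟩ hne
      exact ((hfdisj i j (fun h => hne (by rw [h]))).mono Set.inter_subset_left
        Set.inter_subset_left)
    · rw [Set.sUnion_range, hbdef]
      rw [← Set.iUnion_inter, hfU, Set.union_inter_distrib_right,
        Set.inter_self, hdisj.symm.inter_eq, Set.union_empty]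
  · refine ⟨Set.finite_range _, ncard_range hcinj, ?_, ?_, ?_⟩
    · rintro _ ⟨i, rfl⟩; exact hc_base i
    · rintro _ ⟨i, rfl⟩ _ ⟨j, rfl⟩ hne
      exact ((hfdisj i j (fun h => hne (by rw [h]))).mono Set.inter_subset_left
        Set.inter_subset_left)
    · rw [Set.sUnion_range, hcdef]
      rw [← Set.iUnion_inter, hfU, Set.union_inter_distrib_right,
        hdisj.inter_eq, Set.inter_self, Set.empty_union]
  · have : f = u b c := funext hfeq
    rw [← hfr, this]

/-- One swap of the pairing is a single edge (needs `k ≥ 3`). -/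
lemma step_swap (hk : 3 ≤ k) {b c : Fin k → Set α} (hb : Valid M₁ k b) (hc : Valid M₂ k c)
    {x y : Fin k} (hxy : x ≠ y) :
    S (Matroid.disjointSum M₁ M₂ hdisj) k (Set.range (u b c))
      (Set.range (u b (c ∘ Equiv.swap x y))) := by
  have hc' : Valid M₂ k (c ∘ Equiv.swap x y) := valid_comp_equiv hc _
  refine ⟨(valid_u hb hc).2, (valid_u hb hc').2, ?_⟩
  have hm : ∃ m : Fin k, m ≠ x ∧ m ≠ y := by
    by_contra h
    push_neg at h
    have hsub : (Finset.univ : Finset (Fin k)) ⊆ {x, y} := by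
      intro m _
      rcases eq_or_ne m x with h1 | h1
      · simp [h1]
      · simp [h m h1]
    have := Finset.card_le_card hsub
    have h2 : ({x, y} : Finset (Fin k)).card ≤ 2 := Finset.card_insert_le x {y} |>.trans (by simp)
    simp [Fintype.card_fin] at this
    omega
  obtain ⟨m, hmx, hmy⟩ := hm
  refine ⟨u b c m, Set.mem_range_self m, ⟨m, ?_⟩⟩
  have : (c ∘ Equiv.swap x y) m = c m := by
    simp [Equiv.swap_apply_of_ne_of_ne hmx hmy]
  simp only [u, this]

/-- Repairing: permuting `c` stays in the same connected component. -/
lemma conn_perm (hk : 3 ≤ k) {b : Fin k → Set α} (hb : Valid M₁ k b)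
    (σ : Equiv.Perm (Fin k)) :
    ∀ c : Fin k → Set α, Valid M₂ k c →
      Conn (Matroid.disjointSum M₁ M₂ hdisj) k (Set.range (u b c))
        (Set.range (u b (c ∘ σ))) := by
  refine Equiv.Perm.swap_induction_on σ ?_ ?_
  · intro c _hc
    have : c ∘ ⇑(1 : Equiv.Perm (Fin k)) = c := by funext i; simp
    rw [this]
    exact Relation.ReflTransGen.refl
  · intro f x y hxy ih c hc
    have hcomp : c ∘ ⇑(Equiv.swap x y * f) = (c ∘ Equiv.swap x y) ∘ f := by
      funext i; simp [Equiv.Perm.mul_apply]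
    rw [hcomp]
    exact Relation.ReflTransGen.head (step_swap hk hb hc hxy)
      (ih (c ∘ Equiv.swap x y) (valid_comp_equiv hc _))

lemma range_reindex {β : Type*} {b b' : Fin k → β} (hb'i : Function.Injective b')
    (hr : Set.range b' ⊆ Set.range b) :
    ∃ σ : Equiv.Perm (Fin k), ∀ i, b' i = b (σ i) := by
  have hgex : ∀ i, ∃ j, b j = b' i := fun i => hr (Set.mem_range_self i)
  choose g hg using hgex
  have hgi : Function.Injective g := by
    intro i j hij
    apply hb'i
    rw [← hg i, ← hg j, hij]
  exact ⟨Equiv.ofBijective g (Finite.injective_iff_bijective.mp hgi),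
    fun i => (hg i).symm⟩

/-- Same range, same `c`: connected (via repairing). -/
lemma conn_same_range_left (hk : 3 ≤ k) {b b' c : Fin k → Set α} (hb : Valid M₁ k b)
    (hb' : Valid M₁ k b') (hc : Valid M₂ k c) (hr : Set.range b = Set.range b') :
    Conn (Matroid.disjointSum M₁ M₂ hdisj) k (Set.range (u b c)) (Set.range (u b' c)) := by
  obtain ⟨σ, hσ⟩ := range_reindex (b := b) hb'.1 hr.symm.subset
  have hre : Set.range (u b' c) = Set.range (u b (c ∘ σ.symm)) := by
    have hco : u b (c ∘ σ.symm) ∘ ⇑σ = u b' c := by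
      funext i
      simp only [Function.comp_apply, u, Equiv.symm_apply_apply, hσ i]
    rw [← hco, σ.surjective.range_comp]
  rw [hre]
  exact conn_perm hk hb σ.symm c hc

lemma conn_same_range_right (hk : 3 ≤ k) {b c c' : Fin k → Set α} (hb : Valid M₁ k b)
    (hc : Valid M₂ k c) (hc' : Valid M₂ k c') (hr : Set.range c = Set.range c') :
    Conn (Matroid.disjointSum M₁ M₂ hdisj) k (Set.range (u b c)) (Set.range (u b c')) := by
  obtain ⟨σ, hσ⟩ := range_reindex (b := c) hc'.1 hr.symm.subset
  have hre : u b c' = u b (c ∘ σ) := by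
    funext i
    simp only [u, Function.comp_apply, hσ i]
  rw [hre]
  exact conn_perm hk hb σ c hc

/-- Sharing a base on the right side: connected. -/
lemma conn_step_right (hk : 3 ≤ k) {b c c' : Fin k → Set α} (hb : Valid M₁ k b)
    (hc : Valid M₂ k c) (hc' : Valid M₂ k c')
    (hshare : (Set.range c ∩ Set.range c').Nonempty) :
    Conn (Matroid.disjointSum M₁ M₂ hdisj) k (Set.range (u b c)) (Set.range (u b c')) := by
  obtain ⟨C, ⟨i, hi⟩, ⟨j, hj⟩⟩ := hshare
  set c'' : Fin k → Set α := c' ∘ Equiv.swap i j with hc''def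
  have hc'' : Valid M₂ k c'' := valid_comp_equiv hc' _
  have hc''i : c'' i = c i := by
    rw [hc''def]
    simp only [Function.comp_apply, Equiv.swap_apply_left]
    rw [hj, hi]
  have hstep : S (Matroid.disjointSum M₁ M₂ hdisj) k (Set.range (u b c))
      (Set.range (u b c'')) := by
    refine ⟨(valid_u hb hc).2, (valid_u hb hc'').2, ?_⟩
    exact ⟨u b c i, Set.mem_range_self i, ⟨i, by simp only [u, hc''i]⟩⟩
  have hrange : Set.range c'' = Set.range c' := (Equiv.swap i j).surjective.range_comp c'
  exact Relation.ReflTransGen.head hstep (conn_same_range_right hk hb hc'' hc' hrange)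

/-- Lift a path in `𝔊_k(M₂)` (with `b` fixed). -/
lemma conn_right (hk : 3 ≤ k) {A A' : Set (Set α)}
    (h : Relation.ReflTransGen (S M₂ k) A A') :
    ∀ b c c' : Fin k → Set α, Valid M₁ k b → Valid M₂ k c → Valid M₂ k c' →
      Set.range c = A → Set.range c' = A' →
      Conn (Matroid.disjointSum M₁ M₂ hdisj) k (Set.range (u b c)) (Set.range (u b c')) := by
  induction h with
  | refl =>
    intro b c c' hb hc hc' hrc hrc'
    exact conn_same_range_right hk hb hc hc' (by rw [hrc, hrc'])
  | tail h1 h2 ih =>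
    rename_i Bv Cv
    intro b c c' hb hc hc' hrc hrc'
    obtain ⟨c'', hc'', hrc''⟩ := exists_valid_of_vertex h2.1
    refine (ih b c c'' hb hc hc'' hrc hrc'').trans ?_
    refine conn_step_right hk hb hc'' hc' ?_
    rw [hrc'', hrc']
    exact h2.2.2

/-- Sharing a base on the left side: connected. -/
lemma conn_step_left (hk : 3 ≤ k) {b b' c : Fin k → Set α} (hb : Valid M₁ k b)
    (hb' : Valid M₁ k b') (hc : Valid M₂ k c)
    (hshare : (Set.range b ∩ Set.range b').Nonempty) :
    Conn (Matroid.disjointSum M₁ M₂ hdisj) k (Set.range (u b c)) (Set.range (u b' c)) := by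
  obtain ⟨B, ⟨i, hi⟩, ⟨j, hj⟩⟩ := hshare
  set b'' : Fin k → Set α := b' ∘ Equiv.swap i j with hb''def
  have hb'' : Valid M₁ k b'' := valid_comp_equiv hb' _
  have hb''i : b'' i = b i := by
    rw [hb''def]
    simp only [Function.comp_apply, Equiv.swap_apply_left]
    rw [hj, hi]
  have hstep : S (Matroid.disjointSum M₁ M₂ hdisj) k (Set.range (u b c))
      (Set.range (u b'' c)) := by
    refine ⟨(valid_u hb hc).2, (valid_u hb'' hc).2, ?_⟩
    exact ⟨u b c i, Set.mem_range_self i, ⟨i, by simp only [u, hb''i]⟩⟩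
  have hrange : Set.range b'' = Set.range b' := (Equiv.swap i j).surjective.range_comp b'
  exact Relation.ReflTransGen.head hstep (conn_same_range_left hk hb'' hb' hc hrange)

/-- Lift a path in `𝔊_k(M₁)` (with `c` fixed). -/
lemma conn_left (hk : 3 ≤ k) {A A' : Set (Set α)}
    (h : Relation.ReflTransGen (S M₁ k) A A') :
    ∀ b b' c : Fin k → Set α, Valid M₁ k b → Valid M₁ k b' → Valid M₂ k c →
      Set.range b = A → Set.range b' = A' →
      Conn (Matroid.disjointSum M₁ M₂ hdisj) k (Set.range (u b c)) (Set.range (u b' c)) := by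
  induction h with
  | refl =>
    intro b b' c hb hb' hc hrb hrb'
    exact conn_same_range_left hk hb hb' hc (by rw [hrb, hrb'])
  | tail h1 h2 ih =>
    rename_i Bv Cv
    intro b b' c hb hb' hc hrb hrb'
    obtain ⟨b'', hb'', hrb''⟩ := exists_valid_of_vertex h2.1
    refine (ih b b'' c hb hb'' hc hrb hrb'').trans ?_
    refine conn_step_left hk hb'' hb' hc ?_
    rw [hrb'', hrb']
    exact h2.2.2

end Sum

end KBaseAux

/-- If a rank-`r` matroid `M` on a `k·r`-element ground set (`k ≥ 3`) is the direct sum of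
`M₁` and `M₂`, and the `k`-base graphs of `M₁` and `M₂` are connected and nonempty, then
the `k`-base graph of `M` is connected. -/
theorem k_base_graph_connected_of_direct_sum {α : Type*} (M₁ M₂ : Matroid α)
    [M₁.Finite] [M₂.Finite] (hdisj : Disjoint M₁.E M₂.E) (r k : ℕ) (hk : 3 ≤ k)
    (hrank : ∀ B, (Matroid.disjointSum M₁ M₂ hdisj).IsBase B → B.ncard = r)
    (hE : (Matroid.disjointSum M₁ M₂ hdisj).E.ncard = k * r)
    (h1 : KBaseGraphConnected M₁ k) (h2 : KBaseGraphConnected M₂ k)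
    (hne1 : ∃ P, IsKBaseVertex M₁ k P) (hne2 : ∃ P, IsKBaseVertex M₂ k P) :
    KBaseGraphConnected (Matroid.disjointSum M₁ M₂ hdisj) k := by
  intro P Q hP hQ
  have hb1ne : ∀ B, M₁.IsBase B → B.Nonempty := KBaseAux.base_nonempty hk hne1
  have hb2ne : ∀ B, M₂.IsBase B → B.Nonempty := KBaseAux.base_nonempty hk hne2
  obtain ⟨b, c, hb, hc, hPeq⟩ := KBaseAux.decompose hb1ne hb2ne hP
  obtain ⟨b', c', hb', hc', hQeq⟩ := KBaseAux.decompose hb1ne hb2ne hQ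
  have hpath1 : Relation.ReflTransGen (KBaseAux.S M₁ k) (Set.range b) (Set.range b') :=
    h1 _ _ hb.2 hb'.2
  have hpath2 : Relation.ReflTransGen (KBaseAux.S M₂ k) (Set.range c) (Set.range c') :=
    h2 _ _ hc.2 hc'.2
  have step1 := KBaseAux.conn_left (hdisj := hdisj) hk hpath1 b b' c hb hb' hc rfl rfl
  have step2 := KBaseAux.conn_right (hdisj := hdisj) hk hpath2 b' c c' hb' hc hc' rfl rfl
  have := step1.trans step2
  rw [hPeq, hQeq]
  exact this
end
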